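/- Let (α, T, N, B, κ, τ) be a spacelike Frenet curve (with spacelike principal normal) in E₁³, let a, b, c, d, λ ∈ ℝ, and define β(s) = α(s) + (a·s + b)·T(s) + λ·N(s) + (c·s + d)·B(s). Then for every s, ⟨β'(s), N(s)⟩ = (a·s + b)·κ(s) + (c·s + d)·τ(s); consequently ⟨β'(s), N(s)⟩ = 0 for all s if and only if (a·s + b)·κ(s) = −(c·s + d)·τ(s) for all s, i.e. α is a generalized Euler spiral with κ/τ = ε·(c·s+d)/(a·s+b) for ε = −1. -/
import Mathlib


/-- The Minkowski bilinear form on ℝ³: `⟨x,y⟩ = −x₀y₀ + x₁y₁ + x₂y₂`. -/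
def mink (x y : Fin 3 → ℝ) : ℝ := -(x 0 * y 0) + x 1 * y 1 + x 2 * y 2

lemma mink_add_left (x y z : Fin 3 → ℝ) : mink (x + y) z = mink x z + mink y z := by
  simp [mink]; ring

lemma mink_smul_left (r : ℝ) (x y : Fin 3 → ℝ) : mink (r • x) y = r * mink x y := by
  simp [mink]; ring

lemma mink_comm (x y : Fin 3 → ℝ) : mink x y = mink y x := by
  simp [mink]; ring

/-- For a spacelike Frenet curve (with spacelike principal normal)
`(α, T, N, B, κ, τ)` in `E₁³` and
`β(s) = α(s) + (a·s+b)·T(s) + λ·N(s) + (c·s+d)·B(s)`, one has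
`⟨β'(s), N(s)⟩ = (a·s+b)·κ(s) + (c·s+d)·τ(s)`; consequently `⟨β', N⟩ ≡ 0` iff
`(a·s+b)·κ(s) = −(c·s+d)·τ(s)` for all `s`, i.e. iff `α` is a generalized Euler
spiral with `κ/τ = ε·(c·s+d)/(a·s+b)`, `ε = −1`. -/
theorem beta_involute_evolute_iff_generalized_euler_spacelike
    (α T N B : ℝ → Fin 3 → ℝ) (κ τ : ℝ → ℝ)
    (hα : ∀ s, HasDerivAt α (T s) s)
    (hT : ∀ s, HasDerivAt T (κ s • N s) s)
    (hN : ∀ s, HasDerivAt N (-κ s • T s + τ s • B s) s)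
    (hB : ∀ s, HasDerivAt B (τ s • N s) s)
    (hTT : ∀ s, mink (T s) (T s) = 1)
    (hNN : ∀ s, mink (N s) (N s) = 1)
    (hBB : ∀ s, mink (B s) (B s) = -1)
    (hTN : ∀ s, mink (T s) (N s) = 0)
    (hTB : ∀ s, mink (T s) (B s) = 0)
    (hNB : ∀ s, mink (N s) (B s) = 0)
    (a b c d lam : ℝ) (β : ℝ → Fin 3 → ℝ)
    (hβ : ∀ s : ℝ, β s = α s + (a * s + b) • T s + lam • N s + (c * s + d) • B s) :
    (∀ s : ℝ, mink (deriv β s) (N s) = (a * s + b) * κ s + (c * s + d) * τ s) ∧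
    ((∀ s : ℝ, mink (deriv β s) (N s) = 0) ↔
      (∀ s : ℝ, (a * s + b) * κ s = -((c * s + d) * τ s))) := by
  have key : ∀ s : ℝ, mink (deriv β s) (N s) = (a * s + b) * κ s + (c * s + d) * τ s := by
    intro s
    have hβfun : β = fun s => α s + (a * s + b) • T s + lam • N s + (c * s + d) • B s :=
      funext hβ
    have hlin : HasDerivAt (fun s : ℝ => a * s + b) a s := by
      simpa using ((hasDerivAt_id s).const_mul a).add_const b
    have hlin2 : HasDerivAt (fun s : ℝ => c * s + d) c s := by
      simpa using ((hasDerivAt_id s).const_mul c).add_const d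
    have h1 : HasDerivAt (fun s => (a * s + b) • T s)
        ((a * s + b) • (κ s • N s) + a • T s) s := hlin.smul (hT s)
    have h2 : HasDerivAt (fun s => lam • N s)
        (lam • (-κ s • T s + τ s • B s)) s := (hN s).const_smul lam
    have h3 : HasDerivAt (fun s => (c * s + d) • B s)
        ((c * s + d) • (τ s • N s) + c • B s) s := hlin2.smul (hB s)
    have hd : HasDerivAt β
        (T s + ((a * s + b) • (κ s • N s) + a • T s)
          + lam • (-κ s • T s + τ s • B s)
          + ((c * s + d) • (τ s • N s) + c • B s)) s := by
      rw [hβfun]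
      exact (((hα s).add h1).add h2).add h3
    rw [hd.deriv]
    have hBN : mink (B s) (N s) = 0 := by rw [mink_comm]; exact hNB s
    simp only [smul_add, smul_smul, mink_add_left, mink_smul_left, smul_eq_mul,
      hTN s, hNN s, hBN, neg_smul]
    have : mink (-(κ s • T s)) (N s) = -(κ s * mink (T s) (N s)) := by
      rw [← neg_smul, mink_smul_left]; ring
    rw [this, hTN s]
    ring
  refine ⟨key, ?_, ?_⟩
  · intro h0 s
    have := key s
    rw [h0 s] at this
    linarith
  · intro h s
    rw [key s, h s]
    ring
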